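/- (Cycles of nearly integral edges are long.) Let x be a feasible solution of the path-variant Held-Karp relaxation with respect to s and t, and let γ ∈ (0,1). If C is a cycle in the complete graph on V (a closed walk through k ≥ 3 distinct vertices using k distinct edges) all of whose edges e satisfy x_e ≥ 1 − γ, then the length k of C satisfies k ≥ 1/γ. -/

import Mathlib

/-!
Let `S` be the vertex set of the cycle and `k = |S|`. Summing the degree constraints over `S`
gives `2 x(E(S)) + x(δ(S)) = 2k - |S ∩ {s, t}|`, while the cut constraints give
`x(δ(S)) ≥ 2 - |S ∩ {s, t}|`; hence the subtour-elimination inequality `x(E(S)) ≤ k - 1`.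
For `k ≥ 3` the `k` edges of the cycle are distinct edges of `E(S)`, each with `x_e ≥ 1 - γ`,
so `k (1 - γ) ≤ k - 1`, that is `k γ ≥ 1`.
-/

open Finset

namespace TSPPath

noncomputable section
open scoped Classical

/-- Edge set of the complete graph on `Fin n`: all unordered pairs of distinct vertices. -/
def Edges (n : ℕ) : Finset (Sym2 (Fin n)) := Finset.univ.filter (fun e => ¬ e.IsDiag)

/-- `cutSet n S` is `δ(S)`: the edges with exactly one endpoint in `S`. -/
def cutSet (n : ℕ) (S : Finset (Fin n)) : Finset (Sym2 (Fin n)) :=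
  (Edges n).filter (fun e => ∃ u v : Fin n, e = s(u, v) ∧ u ∈ S ∧ v ∉ S)

/-- `inSet n S` is `E(S)`: the edges with both endpoints in `S`. -/
def inSet (n : ℕ) (S : Finset (Fin n)) : Finset (Sym2 (Fin n)) :=
  (Edges n).filter (fun e => ∀ v ∈ e, v ∈ S)

/-- Degree of a vertex in an edge set. -/
def deg (n : ℕ) (H : Finset (Sym2 (Fin n))) (v : Fin n) : ℕ :=
  (H.filter (fun e => v ∈ e)).card

/-- Degree of a vertex in an edge multiset (counting multiplicity). -/
def mdeg (n : ℕ) (L : Multiset (Sym2 (Fin n))) (v : Fin n) : ℕ :=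
  (L.filter (fun e => v ∈ e)).card

/-- Feasibility for the path-variant Held–Karp relaxation with endpoints `s, t`. -/
def HKPathFeasible (n : ℕ) (s t : Fin n) (x : Sym2 (Fin n) → ℝ) : Prop :=
  (∀ e, 0 ≤ x e) ∧
  (∑ e ∈ cutSet n {s}, x e = 1) ∧
  (∑ e ∈ cutSet n {t}, x e = 1) ∧
  (∀ v : Fin n, v ≠ s → v ≠ t → ∑ e ∈ cutSet n {v}, x e = 2) ∧
  (∀ S : Finset (Fin n), S.Nonempty → S ≠ Finset.univ →
      ((s ∈ S ∧ t ∉ S) ∨ (s ∉ S ∧ t ∈ S)) → 1 ≤ ∑ e ∈ cutSet n S, x e) ∧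
  (∀ S : Finset (Fin n), S.Nonempty → S ≠ Finset.univ →
      ¬((s ∈ S ∧ t ∉ S) ∨ (s ∉ S ∧ t ∈ S)) → 2 ≤ ∑ e ∈ cutSet n S, x e)

/-- `c` is a metric: nonnegative, symmetric, vanishing on the diagonal, triangle inequality. -/
def IsMetric (n : ℕ) (c : Fin n → Fin n → ℝ) : Prop :=
  (∀ u v, 0 ≤ c u v) ∧ (∀ u v, c u v = c v u) ∧ (∀ u, c u u = 0) ∧
  (∀ u v w, c u w ≤ c u v + c v w)

/-- Cost of an unordered edge (defined by symmetrization, which agrees with `c u v`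
whenever `c` is symmetric). -/
def ecost (n : ℕ) (c : Fin n → Fin n → ℝ) (e : Sym2 (Fin n)) : ℝ :=
  Sym2.lift ⟨fun u v => (c u v + c v u) / 2, by intro u v; ring⟩ e

/-- `c(x) = ∑_{e ∈ E} x_e c(e)`. -/
def xcost (n : ℕ) (c : Fin n → Fin n → ℝ) (x : Sym2 (Fin n) → ℝ) : ℝ :=
  ∑ e ∈ Edges n, x e * ecost n c e

/-- `c(F) = ∑_{e ∈ F} c(e)` for an edge set `F`. -/
def fcost (n : ℕ) (c : Fin n → Fin n → ℝ) (F : Finset (Sym2 (Fin n))) : ℝ :=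
  ∑ e ∈ F, ecost n c e

/-- `H` is (the edge set of) a spanning tree of the complete graph on `Fin n`. -/
def IsSpanningTree (n : ℕ) (H : Finset (Sym2 (Fin n))) : Prop :=
  H ⊆ Edges n ∧ (SimpleGraph.fromEdgeSet (H : Set (Sym2 (Fin n)))).Connected ∧
    H.card = n - 1

/-- The wrong-parity set of an edge set `H`: internal vertices of odd degree
together with the endpoints of even degree. -/
def wrongParity (n : ℕ) (s t : Fin n) (H : Finset (Sym2 (Fin n))) : Finset (Fin n) :=
  Finset.univ.filter (fun v =>
    if v = s ∨ v = t then Even (deg n H v) else Odd (deg n H v))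

/-- `M` is a perfect matching on the vertex set `T`: vertex-disjoint edges covering
exactly the vertices of `T`. -/
def IsPerfectMatchingOn (n : ℕ) (T : Finset (Fin n)) (M : Finset (Sym2 (Fin n))) : Prop :=
  M ⊆ Edges n ∧ (∀ v ∈ T, deg n M v = 1) ∧ (∀ v : Fin n, v ∉ T → deg n M v = 0)

/-- `J` is a `T`-join: exactly the vertices of `T` have odd degree in `J`. -/
def IsTJoin (n : ℕ) (T : Finset (Fin n)) (J : Finset (Sym2 (Fin n))) : Prop :=
  J ⊆ Edges n ∧ ∀ v : Fin n, Odd (deg n J v) ↔ v ∈ T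

/-- There is a Hamiltonian path from `s` to `t` in the complete graph on `Fin n`
of cost (w.r.t. the metric `c`) at most `B`. -/
def ExistsHamPath (n : ℕ) (s t : Fin n) (c : Fin n → Fin n → ℝ) (B : ℝ) : Prop :=
  ∃ p : (⊤ : SimpleGraph (Fin n)).Walk s t,
    p.IsHamiltonian ∧ (p.edges.map (ecost n c)).sum ≤ B

/-- Connectivity of the multigraph `(V, L)` (equivalently, of its support graph,
which must span all of `Fin n`). -/
def MConnected (n : ℕ) (L : Multiset (Sym2 (Fin n))) : Prop :=
  (SimpleGraph.fromEdgeSet {e | e ∈ L}).Connected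

/-- The multiset of edges traversed by the walk given by a vertex list `w`. -/
def walkEdges (n : ℕ) (w : List (Fin n)) : Multiset (Sym2 (Fin n)) :=
  ((w.zip w.tail).map (Function.uncurry Sym2.mk) : List (Sym2 (Fin n)))

/-- `w` is an Eulerian trail from `s` to `t` of the edge multiset `L`: a walk from `s`
to `t` whose multiset of traversed edges is exactly `L` (with multiplicity). -/
def IsEulerianTrail (n : ℕ) (L : Multiset (Sym2 (Fin n))) (s t : Fin n)
    (w : List (Fin n)) : Prop :=
  w.head? = some s ∧ w.getLast? = some t ∧ walkEdges n w = L

end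

end TSPPath

namespace List

variable {α : Type*} [DecidableEq α] {l : List α}

theorem zip_rotate_one_eq_map_formPerm (hl : l.Nodup) :
    l.zip (l.rotate 1) = l.map fun a => (a, l.formPerm a) := by
  refine ext_getElem (by simp) fun i h₁ h₂ => ?_
  simp [getElem_rotate, formPerm_apply_getElem _ hl]

theorem formPerm_apply_apply_ne_self (hl : l.Nodup) (hlen : 3 ≤ l.length) {a : α}
    (ha : a ∈ l) : l.formPerm (l.formPerm a) ≠ a := by
  obtain ⟨i, hi, rfl⟩ := getElem_of_mem ha
  rw [← Equiv.Perm.mul_apply, ← pow_two, formPerm_pow_apply_getElem _ hl, Ne,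
    hl.getElem_inj_iff]
  intro h
  have : i + 2 ≡ i + 0 [MOD l.length] := by rwa [Nat.ModEq, add_zero, Nat.mod_eq_of_lt hi]
  have := Nat.le_of_dvd two_pos (Nat.modEq_zero_iff_dvd.mp (Nat.ModEq.add_left_cancel' i this))
  omega

theorem nodup_map_sym2Mk_zip_rotate_one (hl : l.Nodup) (hlen : 3 ≤ l.length) :
    ((l.zip (l.rotate 1)).map (Function.uncurry Sym2.mk)).Nodup := by
  rw [zip_rotate_one_eq_map_formPerm hl, map_map]
  refine hl.map_on fun a _ b hb hab => ?_
  rcases Sym2.eq_iff.mp hab with ⟨rfl, -⟩ | ⟨rfl, hba⟩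
  · rfl
  · exact absurd hba (formPerm_apply_apply_ne_self hl hlen hb)

end List

namespace TSPPath

variable {n : ℕ}

theorem mk_mem_Edges_iff {a b : Fin n} : s(a, b) ∈ Edges n ↔ a ≠ b := by
  simp [Edges]

theorem mk_mem_inSet_iff {a b : Fin n} {S : Finset (Fin n)} :
    s(a, b) ∈ inSet n S ↔ a ≠ b ∧ a ∈ S ∧ b ∈ S := by
  simp [inSet, mk_mem_Edges_iff]

theorem mk_mem_cutSet_iff {a b : Fin n} {S : Finset (Fin n)} :
    s(a, b) ∈ cutSet n S ↔ (a ∈ S ∧ b ∉ S) ∨ (b ∈ S ∧ a ∉ S) := by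
  simp only [cutSet, mem_filter, mk_mem_Edges_iff, Sym2.eq_iff]
  constructor
  · rintro ⟨-, u, v, ⟨rfl, rfl⟩ | ⟨rfl, rfl⟩, hu, hv⟩ <;> tauto
  · rintro (⟨ha, hb⟩ | ⟨hb, ha⟩)
    · exact ⟨ne_of_mem_of_not_mem ha hb, a, b, by tauto⟩
    · exact ⟨(ne_of_mem_of_not_mem hb ha).symm, b, a, by tauto⟩

theorem cutSet_singleton (v : Fin n) : cutSet n {v} = (Edges n).filter (v ∈ ·) := by
  ext e
  induction e with
  | _ a b => by_cases a = b <;> aesop (add simp [mk_mem_cutSet_iff, mk_mem_Edges_iff])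

theorem sum_sum_cutSet_singleton_eq (S : Finset (Fin n)) (x : Sym2 (Fin n) → ℝ) :
    ∑ v ∈ S, ∑ e ∈ cutSet n {v}, x e =
      2 * ∑ e ∈ inSet n S, x e + ∑ e ∈ cutSet n S, x e := by
  have hcount : ∀ e ∈ Edges n, ∑ v ∈ S, (if v ∈ e then x e else 0) =
      (if e ∈ inSet n S then 2 * x e else 0) + (if e ∈ cutSet n S then x e else 0) := by
    intro e he
    induction e with
    | _ a b =>
      have hab : a ≠ b := mk_mem_Edges_iff.mp he
      have hsplit : ∀ v, (if v ∈ s(a, b) then x s(a, b) else 0) =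
          (if v = a then x s(a, b) else 0) + (if v = b then x s(a, b) else 0) := by
        intro v
        by_cases hva : v = a <;> by_cases hvb : v = b <;> simp_all
      simp only [hsplit, sum_add_distrib, sum_ite_eq', mk_mem_inSet_iff, mk_mem_cutSet_iff]
      by_cases ha : a ∈ S <;> by_cases hb : b ∈ S <;> simp [ha, hb, hab, two_mul]
  calc ∑ v ∈ S, ∑ e ∈ cutSet n {v}, x e
      = ∑ e ∈ Edges n, ∑ v ∈ S, (if v ∈ e then x e else 0) := by
        simp_rw [cutSet_singleton, sum_filter]
        exact sum_comm
    _ = ∑ e ∈ Edges n, ((if e ∈ inSet n S then 2 * x e else 0) +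
          (if e ∈ cutSet n S then x e else 0)) := sum_congr rfl hcount
    _ = 2 * ∑ e ∈ inSet n S, x e + ∑ e ∈ cutSet n S, x e := by
        have hin : Edges n ∩ inSet n S = inSet n S := inter_eq_right.mpr (filter_subset _ _)
        have hcut : Edges n ∩ cutSet n S = cutSet n S := inter_eq_right.mpr (filter_subset _ _)
        rw [sum_add_distrib, sum_ite_mem, sum_ite_mem, hin, hcut, mul_sum]

namespace HKPathFeasible

variable {s t : Fin n} {x : Sym2 (Fin n) → ℝ}

theorem sum_cutSet_singleton_eq (hx : HKPathFeasible n s t x) (hst : s ≠ t) (v : Fin n) :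
    ∑ e ∈ cutSet n {v}, x e = 2 - (if v = s then 1 else 0) - (if v = t then 1 else 0) := by
  obtain ⟨-, hs, ht, hinternal, -⟩ := hx
  by_cases hvs : v = s
  · subst hvs
    norm_num [hs, hst]
  by_cases hvt : v = t
  · subst hvt
    norm_num [ht, hvs]
  simp [hinternal v hvs hvt, hvs, hvt]

theorem sum_sum_cutSet_singleton_eq (hx : HKPathFeasible n s t x) (hst : s ≠ t)
    (S : Finset (Fin n)) :
    ∑ v ∈ S, ∑ e ∈ cutSet n {v}, x e =
      2 * #S - (if s ∈ S then 1 else 0) - (if t ∈ S then 1 else 0) := by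
  simp_rw [hx.sum_cutSet_singleton_eq hst, sum_sub_distrib, sum_const, sum_ite_eq', nsmul_eq_mul]
  ring

theorem two_sub_le_sum_cutSet (hx : HKPathFeasible n s t x) {S : Finset (Fin n)}
    (hS : S.Nonempty) :
    2 - (if s ∈ S then 1 else 0) - (if t ∈ S then 1 else 0) ≤ ∑ e ∈ cutSet n S, x e := by
  obtain ⟨hx0, -, -, -, hcut1, hcut2⟩ := hx
  by_cases hs : s ∈ S <;> by_cases ht : t ∈ S <;> simp only [hs, ht, if_true, if_false]
  · linarith [sum_nonneg fun e (_ : e ∈ cutSet n S) => hx0 e]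
  · linarith [hcut1 S hS (fun h => ht (h ▸ mem_univ t)) (by tauto)]
  · linarith [hcut1 S hS (fun h => hs (h ▸ mem_univ s)) (by tauto)]
  · linarith [hcut2 S hS (fun h => hs (h ▸ mem_univ s)) (by tauto)]

theorem sum_inSet_le (hx : HKPathFeasible n s t x) (hst : s ≠ t) {S : Finset (Fin n)}
    (hS : S.Nonempty) : ∑ e ∈ inSet n S, x e ≤ #S - 1 := by
  have hdeg := hx.sum_sum_cutSet_singleton_eq hst S
  have hcut := hx.two_sub_le_sum_cutSet hS
  rw [TSPPath.sum_sum_cutSet_singleton_eq] at hdeg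
  linarith

end HKPathFeasible

theorem mk_mem_inSet_toFinset_of_mem_zip_rotate_one {C : List (Fin n)} (hC : C.Nodup)
    (hlen : 2 ≤ C.length) {p : Fin n × Fin n} (hp : p ∈ C.zip (C.rotate 1)) :
    Function.uncurry Sym2.mk p ∈ inSet n C.toFinset := by
  rw [List.zip_rotate_one_eq_map_formPerm hC] at hp
  obtain ⟨a, ha, rfl⟩ := List.mem_map.mp hp
  have hne : C.formPerm a ≠ a := (List.formPerm_apply_mem_ne_self_iff _ hC a ha).mpr hlen
  simp [mk_mem_inSet_iff, ha, hne.symm, List.formPerm_apply_mem_of_mem ha]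

theorem length_mul_le_sum_inSet_toFinset {C : List (Fin n)} (hC : C.Nodup)
    (hlen : 3 ≤ C.length) {x : Sym2 (Fin n) → ℝ} (hx0 : ∀ e, 0 ≤ x e) {c : ℝ}
    (hc : ∀ p ∈ C.zip (C.rotate 1), c ≤ x (Function.uncurry Sym2.mk p)) :
    C.length * c ≤ ∑ e ∈ inSet n C.toFinset, x e := by
  set L := (C.zip (C.rotate 1)).map (Function.uncurry Sym2.mk)
  have hL : L.length = C.length := by simp [L]
  calc C.length * c ≤ (L.map x).sum := by
        have hcL : ∀ y ∈ L.map x, c ≤ y := by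
          simp only [L, List.map_map, List.mem_map]
          rintro _ ⟨p, hp, rfl⟩
          exact hc p hp
        simpa [hL] using List.card_nsmul_le_sum (L.map x) c hcL
    _ = ∑ e ∈ L.toFinset, x e :=
        (List.sum_toFinset x (C.nodup_map_sym2Mk_zip_rotate_one hC hlen)).symm
    _ ≤ ∑ e ∈ inSet n C.toFinset, x e := by
        refine sum_le_sum_of_subset_of_nonneg (fun e he => ?_) fun e _ _ => hx0 e
        obtain ⟨p, hp, rfl⟩ := List.mem_map.mp (List.mem_toFinset.mp he)
        exact mk_mem_inSet_toFinset_of_mem_zip_rotate_one hC (by omega) hp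

theorem nearly_integral_cycles_long_general (n : ℕ) (s t : Fin n) (hst : s ≠ t)
    (x : Sym2 (Fin n) → ℝ) (hx : HKPathFeasible n s t x)
    (γ : ℝ) (hγ0 : 0 < γ)
    (C : List (Fin n)) (hnodup : C.Nodup) (hlen : 3 ≤ C.length)
    (hedges : ∀ p ∈ C.zip (C.rotate 1), 1 - γ ≤ x (Function.uncurry Sym2.mk p)) :
    1 / γ ≤ (C.length : ℝ) := by
  have hx0 : ∀ e, 0 ≤ x e := hx.1
  have hS : C.toFinset.Nonempty :=
    List.toFinset_nonempty_iff _ |>.mpr (List.ne_nil_of_length_pos (by omega))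
  have hlower := length_mul_le_sum_inSet_toFinset hnodup hlen hx0 hedges
  have hupper := hx.sum_inSet_le hst hS
  rw [List.toFinset_card_of_nodup hnodup] at hupper
  rw [div_le_iff₀ hγ0]
  linarith

/-- (Cycles of nearly integral edges are long.) Any cycle through
`k ≥ 3` distinct vertices all of whose edges `e` satisfy `x_e ≥ 1 − γ` has length
`k ≥ 1/γ`. -/
theorem nearly_integral_cycles_long (n : ℕ) (hn : 2 ≤ n) (s t : Fin n) (hst : s ≠ t)
    (x : Sym2 (Fin n) → ℝ) (hx : HKPathFeasible n s t x)
    (γ : ℝ) (hγ0 : 0 < γ) (hγ1 : γ < 1)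
    (C : List (Fin n)) (hnodup : C.Nodup) (hlen : 3 ≤ C.length)
    (hedges : ∀ p ∈ C.zip (C.rotate 1), 1 - γ ≤ x (Function.uncurry Sym2.mk p)) :
    1 / γ ≤ (C.length : ℝ) :=
  nearly_integral_cycles_long_general n s t hst x hx γ hγ0 C hnodup hlen hedges

end TSPPath
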